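/- Fix A > C > 0, D > 0, d ∈ ℝ, and ε ∈ ℝ with ε ≠ 0. Set 𝕀 = diag(A, C, C) and 𝐈(Γ) = 𝕀 + D·E − D·Γ Γᵀ. Let Ω, Γ : ℝ → ℝ³ be differentiable curves with |Γ(t)| = 1, set 𝐌(t) = 𝐈(Γ(t))Ω(t) + dΓ(t), and suppose 𝐌̇(t) = 𝐌(t) × Ω(t) and Γ̇(t) = ε Γ(t) × Ω(t) for all t. Define ρ(s) = √(C(A+D) + D(A−C)s²), F(t) = ρ(Γ₁(t)) Ω₁(t), G(t) = (A − C) Ω₁(t) Γ₁(t) + C ⟨Ω(t), Γ(t)⟩, and let Φ : ℝ → ℝ be any differentiable function with Φ̇(t) = Γ̇₁(t)/(ε ρ(Γ₁(t))) for all t. Then for each choice of sign, the (nonalgebraic) function F₃^± (t) = (± √(D(A−C)) F(t) + D G(t) − d C) · exp(± (1 − ε) √(D(A−C)) Φ(t)) is constant in t. In particular, the spherical ball bearing problem with B = C is integrable for any ε. -/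

import Mathlib

/-!
Coordinates are numbered from `1` here and from `0` in the code.
With `B = C` the momentum is `M = (C + D) Ω + (A - C) Ω₁ e₁ - (D ⟨Ω, Γ⟩ - d) Γ`. Writing
`w = (Γ × Ω)₁`, the equations of motion give `Ġ = -(1 - ε)(A - C) Ω₁ w` (because
`⟨M, Γ⟩ = G + d`) and, through `ρ² Ω₁ = C M₁ + Γ₁ (D G - d C)`, `Ḟ = -(1 - ε)(w / ρ)(D G - d C)`.
So with `r = (1 - ε) w / ρ = (1 - ε) Φ̇` and `K = D G - d C` the pair `(F, K)` obeys the
hyperbolic rotation `Ḟ = -r K`, `K̇ = -κ² r F` with `κ² = D (A - C)`, along which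
`(κ F + K) exp (κ ∫ r)` is constant for both signs of `κ`.
-/

open Matrix

/-- The modified inertia operator `𝐈(Γ) = diag(A,B,C) + D·E − D·Γ Γᵀ` of the
spherical ball bearing problem with one ball. -/
noncomputable def modInertia (A B C D : ℝ) (Γ : Fin 3 → ℝ) : Matrix (Fin 3) (Fin 3) ℝ :=
  Matrix.diagonal ![A, B, C] + D • (1 : Matrix (Fin 3) (Fin 3) ℝ) - D • vecMulVec Γ Γ

theorem HasDerivAt.dotProduct {ι : Type*} [Fintype ι] {f g : ℝ → ι → ℝ} {f' g' : ι → ℝ} {t : ℝ}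
    (hf : HasDerivAt f f' t) (hg : HasDerivAt g g' t) :
    HasDerivAt (fun s => f s ⬝ᵥ g s) (f' ⬝ᵥ g t + f t ⬝ᵥ g') t := by
  have := HasDerivAt.fun_sum (u := Finset.univ)
    fun i _ => (hasDerivAt_pi.1 hf i).fun_mul (hasDerivAt_pi.1 hg i)
  simpa only [_root_.dotProduct, Finset.sum_add_distrib] using this

theorem hasDerivAt_dotProduct_of_cross {M Γ Ω : ℝ → Fin 3 → ℝ} {ε t : ℝ}
    (hM : HasDerivAt M (M t ⨯₃ Ω t) t) (hΓ : HasDerivAt Γ (ε • (Γ t ⨯₃ Ω t)) t) :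
    HasDerivAt (fun s => M s ⬝ᵥ Γ s) ((1 - ε) * (M t ⨯₃ Ω t ⬝ᵥ Γ t)) t := by
  refine (hM.dotProduct hΓ).congr_deriv ?_
  rw [dotProduct_smul, triple_product_permutation, ← cross_anticomm (M t), dotProduct_neg,
    dotProduct_comm (M t ⨯₃ Ω t), smul_eq_mul]
  ring

namespace SymmetricBallBearing

noncomputable def momentum (A C D d : ℝ) (Γ Ω : Fin 3 → ℝ) : Fin 3 → ℝ :=
  modInertia A C C D Γ *ᵥ Ω + d • Γ

noncomputable def rho (A C D s : ℝ) : ℝ := √(C * (A + D) + D * (A - C) * s ^ 2)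

def G (A C : ℝ) (Ω Γ : Fin 3 → ℝ) : ℝ := (A - C) * Ω 0 * Γ 0 + C * (Ω ⬝ᵥ Γ)

variable {A C D d : ℝ}

theorem momentum_eq (Γ Ω : Fin 3 → ℝ) :
    momentum A C D d Γ Ω =
      (C + D) • Ω + ((A - C) * Ω 0) • Pi.single 0 1 - (D * (Ω ⬝ᵥ Γ) - d) • Γ := by
  ext i
  fin_cases i <;>
    simp [momentum, modInertia, mulVec, vecMulVec, dotProduct, Fin.sum_univ_three] <;> ring

theorem momentum_dotProduct {Γ : Fin 3 → ℝ} (hΓ : Γ ⬝ᵥ Γ = 1) (Ω : Fin 3 → ℝ) :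
    momentum A C D d Γ Ω ⬝ᵥ Γ = G A C Ω Γ + d := by
  rw [momentum_eq, G]
  simp only [sub_dotProduct, add_dotProduct, smul_dotProduct, hΓ, single_dotProduct, smul_eq_mul]
  ring

theorem momentum_cross_dotProduct (Γ Ω : Fin 3 → ℝ) :
    momentum A C D d Γ Ω ⨯₃ Ω ⬝ᵥ Γ = -((A - C) * Ω 0 * (Γ ⨯₃ Ω) 0) := by
  rw [dotProduct_comm, triple_product_permutation, momentum_eq, ← cross_anticomm Γ]
  simp only [sub_dotProduct, add_dotProduct, smul_dotProduct, dotProduct_neg, dot_self_cross,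
    dot_cross_self, single_dotProduct, smul_eq_mul]
  ring

theorem momentum_cross_apply_zero (Γ Ω : Fin 3 → ℝ) :
    (momentum A C D d Γ Ω ⨯₃ Ω) 0 = -((D * (Ω ⬝ᵥ Γ) - d) * (Γ ⨯₃ Ω) 0) := by
  rw [momentum_eq]
  simp [cross_apply]

theorem rho_radicand_pos (hC : 0 < C) (hAC : C < A) (hD : 0 < D) (s : ℝ) :
    0 < C * (A + D) + D * (A - C) * s ^ 2 := by
  have hA : 0 < C * (A + D) := mul_pos hC (by linarith)
  have hs := mul_nonneg (mul_pos hD (sub_pos.2 hAC)).le (sq_nonneg s)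
  linarith

theorem rho_pos (hC : 0 < C) (hAC : C < A) (hD : 0 < D) (s : ℝ) : 0 < rho A C D s :=
  Real.sqrt_pos.2 (rho_radicand_pos hC hAC hD s)

theorem rho_sq (hC : 0 < C) (hAC : C < A) (hD : 0 < D) (s : ℝ) :
    rho A C D s ^ 2 = C * (A + D) + D * (A - C) * s ^ 2 :=
  Real.sq_sqrt (rho_radicand_pos hC hAC hD s).le

theorem rho_sq_mul_eq (hC : 0 < C) (hAC : C < A) (hD : 0 < D) (Γ Ω : Fin 3 → ℝ) :
    rho A C D (Γ 0) ^ 2 * Ω 0 = C * momentum A C D d Γ Ω 0 + Γ 0 * (D * G A C Ω Γ - d * C) := by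
  rw [rho_sq hC hAC hD, momentum_eq, G]
  simp only [dotProduct, Fin.sum_univ_three, Pi.sub_apply, Pi.add_apply, Pi.smul_apply,
    smul_eq_mul, Pi.single_eq_same, mul_one]
  ring

theorem hasDerivAt_rho (hC : 0 < C) (hAC : C < A) (hD : 0 < D) {g : ℝ → ℝ} {g' t : ℝ}
    (hg : HasDerivAt g g' t) :
    HasDerivAt (fun s => rho A C D (g s)) (D * (A - C) * g t * g' / rho A C D (g t)) t := by
  unfold rho
  have := (((hg.fun_pow 2).const_mul (D * (A - C))).const_add (C * (A + D))).sqrt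
    (rho_radicand_pos hC hAC hD (g t)).ne'
  convert this using 1
  field_simp
  ring

structure IsMotion (A C D d ε : ℝ) (Ω Γ : ℝ → Fin 3 → ℝ) : Prop where
  dotProduct_self : ∀ t, Γ t ⬝ᵥ Γ t = 1
  hasDerivAt_momentum : ∀ t,
    HasDerivAt (fun s => momentum A C D d (Γ s) (Ω s)) (momentum A C D d (Γ t) (Ω t) ⨯₃ Ω t) t
  hasDerivAt_position : ∀ t, HasDerivAt Γ (ε • (Γ t ⨯₃ Ω t)) t

namespace IsMotion

variable {ε : ℝ} {Ω Γ : ℝ → Fin 3 → ℝ}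

theorem hasDerivAt_G (h : IsMotion A C D d ε Ω Γ) (t : ℝ) :
    HasDerivAt (fun s => G A C (Ω s) (Γ s)) (-((1 - ε) * (A - C) * Ω t 0 * (Γ t ⨯₃ Ω t) 0)) t := by
  have hG : (fun s => G A C (Ω s) (Γ s)) = fun s => momentum A C D d (Γ s) (Ω s) ⬝ᵥ Γ s - d :=
    funext fun s => by rw [momentum_dotProduct (h.dotProduct_self s)]; ring
  rw [hG]
  refine (hasDerivAt_dotProduct_of_cross (h.hasDerivAt_momentum t)
    (h.hasDerivAt_position t)).sub_const d |>.congr_deriv ?_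
  rw [momentum_cross_dotProduct]
  ring

theorem hasDerivAt_rho_mul (h : IsMotion A C D d ε Ω Γ) (hC : 0 < C) (hAC : C < A) (hD : 0 < D)
    (t : ℝ) :
    HasDerivAt (fun s => rho A C D (Γ s 0) * Ω s 0)
      (-((1 - ε) * (Γ t ⨯₃ Ω t) 0 / rho A C D (Γ t 0) * (D * G A C (Ω t) (Γ t) - d * C))) t := by
  have hΓ₀ : HasDerivAt (fun s => Γ s 0) (ε * (Γ t ⨯₃ Ω t) 0) t := by
    simpa using hasDerivAt_pi.1 (h.hasDerivAt_position t) 0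
  have hM₀ : HasDerivAt (fun s => momentum A C D d (Γ s) (Ω s) 0)
      (-((D * (Ω t ⬝ᵥ Γ t) - d) * (Γ t ⨯₃ Ω t) 0)) t := by
    simpa [momentum_cross_apply_zero] using hasDerivAt_pi.1 (h.hasDerivAt_momentum t) 0
  have hK := ((h.hasDerivAt_G t).const_mul D).sub_const (d * C)
  -- `Ω` need not be differentiable: `ρ Ω₁ = (C M₁ + Γ₁ (D G - d C)) / ρ` involves only `M`, `Γ`, `G`.
  have hF : (fun s => rho A C D (Γ s 0) * Ω s 0) = fun s =>
      (C * momentum A C D d (Γ s) (Ω s) 0 + Γ s 0 * (D * G A C (Ω s) (Γ s) - d * C)) /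
        rho A C D (Γ s 0) :=
    funext fun s => by
      rw [eq_div_iff (rho_pos hC hAC hD _).ne', ← rho_sq_mul_eq hC hAC hD]
      ring
  rw [hF]
  refine ((hM₀.const_mul C).fun_add (hΓ₀.fun_mul hK)).fun_div (hasDerivAt_rho hC hAC hD hΓ₀)
    (rho_pos hC hAC hD _).ne' |>.congr_deriv ?_
  have hρ := rho_pos hC hAC hD (Γ t 0)
  have hρΩ := rho_sq_mul_eq (d := d) hC hAC hD (Γ t) (Ω t)
  field_simp
  simp only [G] at hρΩ ⊢
  linear_combination D * ε * Γ t 0 * (A - C) * (Γ t ⨯₃ Ω t) 0 * hρΩ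

theorem hasDerivAt_mul_G_sub (h : IsMotion A C D d ε Ω Γ) (hC : 0 < C) (hAC : C < A) (hD : 0 < D)
    (t : ℝ) :
    HasDerivAt (fun s => D * G A C (Ω s) (Γ s) - d * C)
      (-(D * (A - C) * ((1 - ε) * (Γ t ⨯₃ Ω t) 0 / rho A C D (Γ t 0)) *
        (rho A C D (Γ t 0) * Ω t 0))) t := by
  refine ((h.hasDerivAt_G t).const_mul D).sub_const (d * C) |>.congr_deriv ?_
  have := (rho_pos hC hAC hD (Γ t 0)).ne'
  field_simp

end IsMotion

end SymmetricBallBearing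

theorem add_mul_exp_eq_of_hasDerivAt {F K Ψ r : ℝ → ℝ} (κ : ℝ)
    (hF : ∀ t, HasDerivAt F (-(r t * K t)) t) (hK : ∀ t, HasDerivAt K (-(κ ^ 2 * r t * F t)) t)
    (hΨ : ∀ t, HasDerivAt Ψ (r t) t) (s t : ℝ) :
    (κ * F s + K s) * Real.exp (κ * Ψ s) = (κ * F t + K t) * Real.exp (κ * Ψ t) := by
  have h x : HasDerivAt (fun t => (κ * F t + K t) * Real.exp (κ * Ψ t)) 0 x :=
    (((hF x).const_mul κ).fun_add (hK x)).fun_mul ((hΨ x).const_mul κ).exp |>.congr_deriv (by ring)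
  exact is_const_of_deriv_eq_zero (fun x => (h x).differentiableAt) (fun x => (h x).deriv) s t

theorem spherical_ball_bearing_second_integrable_case_general
    (A C D : ℝ) (hAC : C < A) (hC : 0 < C) (hD : 0 < D) (d ε : ℝ) (hε : ε ≠ 0)
    (Ω Γ : ℝ → Fin 3 → ℝ)
    (hunit : ∀ t : ℝ, Γ t ⬝ᵥ Γ t = 1)
    (M : ℝ → Fin 3 → ℝ)
    (hM : ∀ t : ℝ, M t = (modInertia A C C D (Γ t)).mulVec (Ω t) + d • Γ t)
    (hMdot : ∀ t : ℝ, HasDerivAt M (M t ⨯₃ Ω t) t)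
    (hΓdot : ∀ t : ℝ, HasDerivAt Γ (ε • (Γ t ⨯₃ Ω t)) t)
    (ρ : ℝ → ℝ) (hρ : ∀ s : ℝ, ρ s = Real.sqrt (C * (A + D) + D * (A - C) * s ^ 2))
    (F : ℝ → ℝ) (hF : ∀ t : ℝ, F t = ρ (Γ t 0) * Ω t 0)
    (G : ℝ → ℝ) (hG : ∀ t : ℝ, G t = (A - C) * Ω t 0 * Γ t 0 + C * (Ω t ⬝ᵥ Γ t))
    (Φ : ℝ → ℝ)
    (hΦ : ∀ t : ℝ, HasDerivAt Φ ((ε • (Γ t ⨯₃ Ω t)) 0 / (ε * ρ (Γ t 0))) t)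
    (σ : ℝ) (hσ : σ = 1 ∨ σ = -1) :
    ∀ s t : ℝ,
      (σ * Real.sqrt (D * (A - C)) * F s + D * G s - d * C) *
          Real.exp (σ * (1 - ε) * Real.sqrt (D * (A - C)) * Φ s) =
        (σ * Real.sqrt (D * (A - C)) * F t + D * G t - d * C) *
          Real.exp (σ * (1 - ε) * Real.sqrt (D * (A - C)) * Φ t) := by
  obtain rfl : M = fun t => SymmetricBallBearing.momentum A C D d (Γ t) (Ω t) := funext hM
  obtain rfl : ρ = SymmetricBallBearing.rho A C D := funext hρ
  obtain rfl : F = fun t => SymmetricBallBearing.rho A C D (Γ t 0) * Ω t 0 := funext hF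
  obtain rfl : G = fun t => SymmetricBallBearing.G A C (Ω t) (Γ t) := funext hG
  have motion : SymmetricBallBearing.IsMotion A C D d ε Ω Γ := ⟨hunit, hMdot, hΓdot⟩
  have hκ : (σ * √(D * (A - C))) ^ 2 = D * (A - C) := by
    rw [mul_pow, Real.sq_sqrt (mul_pos hD (sub_pos.2 hAC)).le]
    rcases hσ with rfl | rfl <;> ring
  have hΨ t : HasDerivAt (fun t => (1 - ε) * Φ t)
      ((1 - ε) * (Γ t ⨯₃ Ω t) 0 / SymmetricBallBearing.rho A C D (Γ t 0)) t := by
    refine (hΦ t).const_mul (1 - ε) |>.congr_deriv ?_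
    rw [Pi.smul_apply, smul_eq_mul, mul_div_mul_left _ _ hε, mul_div_assoc]
  intro s t
  convert add_mul_exp_eq_of_hasDerivAt (σ * √(D * (A - C))) (motion.hasDerivAt_rho_mul hC hAC hD)
    (fun t => by rw [hκ]; exact motion.hasDerivAt_mul_G_sub hC hAC hD t) hΨ s t
    using 3 <;> beta_reduce <;> ring

/-- (Second integrable case.) In the dynamically symmetric case
`B = C` (with `A > C`) of the reduced spherical ball bearing system with one ball,
for each sign `σ = ±1` the nonalgebraic function
`F₃^± = (± √(D(A−C)) F + D G − d C) · exp(± (1 − ε) √(D(A−C)) Φ)` is a first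
integral, where `ρ(s) = √(C(A+D) + D(A−C)s²)`, `F = ρ(Γ₁)Ω₁`,
`G = (A−C)Ω₁Γ₁ + C⟨Ω,Γ⟩`, and `Φ` is a primitive of `Γ̇₁/(ε ρ(Γ₁))` along the
motion. In particular, the spherical ball bearing problem with `B = C` is
integrable for any `ε ≠ 0`. -/
theorem spherical_ball_bearing_second_integrable_case
    (A C D : ℝ) (hAC : C < A) (hC : 0 < C) (hD : 0 < D) (d ε : ℝ) (hε : ε ≠ 0)
    (Ω Γ : ℝ → Fin 3 → ℝ)
    (hΩ : Differentiable ℝ Ω)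
    (hunit : ∀ t : ℝ, Γ t ⬝ᵥ Γ t = 1)
    (M : ℝ → Fin 3 → ℝ)
    (hM : ∀ t : ℝ, M t = (modInertia A C C D (Γ t)).mulVec (Ω t) + d • Γ t)
    (hMdot : ∀ t : ℝ, HasDerivAt M (M t ⨯₃ Ω t) t)
    (hΓdot : ∀ t : ℝ, HasDerivAt Γ (ε • (Γ t ⨯₃ Ω t)) t)
    (ρ : ℝ → ℝ) (hρ : ∀ s : ℝ, ρ s = Real.sqrt (C * (A + D) + D * (A - C) * s ^ 2))
    (F : ℝ → ℝ) (hF : ∀ t : ℝ, F t = ρ (Γ t 0) * Ω t 0)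
    (G : ℝ → ℝ) (hG : ∀ t : ℝ, G t = (A - C) * Ω t 0 * Γ t 0 + C * (Ω t ⬝ᵥ Γ t))
    (Φ : ℝ → ℝ)
    (hΦ : ∀ t : ℝ, HasDerivAt Φ ((ε • (Γ t ⨯₃ Ω t)) 0 / (ε * ρ (Γ t 0))) t)
    (σ : ℝ) (hσ : σ = 1 ∨ σ = -1) :
    ∀ s t : ℝ,
      (σ * Real.sqrt (D * (A - C)) * F s + D * G s - d * C) *
          Real.exp (σ * (1 - ε) * Real.sqrt (D * (A - C)) * Φ s) =
        (σ * Real.sqrt (D * (A - C)) * F t + D * G t - d * C) *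
          Real.exp (σ * (1 - ε) * Real.sqrt (D * (A - C)) * Φ t) :=
  spherical_ball_bearing_second_integrable_case_general A C D hAC hC hD d ε hε Ω Γ hunit M hM hMdot
    hΓdot ρ hρ F hF G hG Φ hΦ σ hσ
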